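/- arXiv:1801.05992 — 4 statements merged into one kernel-verified Lean document; each statement's English description precedes it below -/
import Mathlib

section
/- For a finite point set P ⊆ ℝ², the family C_P := {C ⊆ P : conv(C) ∩ P = C} satisfies the extension axiom of convex geometries: for every C ∈ C_P with C ≠ P there exists x ∈ P \ C such that C ∪ {x} ∈ C_P. -/
open Set

section AntiExchange

variable {𝕜 E : Type*} [Field 𝕜] [LinearOrder 𝕜] [IsStrictOrderedRing 𝕜]
  [AddCommGroup E] [Module 𝕜 E] {s : Set E} {x y : E}

theorem notMem_convexHull_insert_of_mem_convexHull_insert (hx : x ∉ convexHull 𝕜 s)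
    (hxy : x ≠ y) (hy : y ∈ convexHull 𝕜 (insert x s)) : x ∉ convexHull 𝕜 (insert y s) := by
  rcases s.eq_empty_or_nonempty with rfl | hs
  · rw [insert_empty_eq, convexHull_singleton] at hy
    exact absurd hy.symm hxy
  intro hx'
  rw [convexHull_insert hs, mem_convexJoin] at hy hx'
  obtain ⟨x₀, hx₀, z, hz, a, b, ha, hb, hab, rfl⟩ := hy
  obtain rfl : x = x₀ := (mem_singleton_iff.1 hx₀).symm
  obtain ⟨y₀, hy₀, w, hw, c, d, hc, hd, hcd, hxeq⟩ := hx'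
  obtain rfl : a • x + b • z = y₀ := (mem_singleton_iff.1 hy₀).symm
  -- Substituting `y = a • x + b • z` into `x = c • y + d • w` isolates `x` as a combination of
  -- `z` and `w`, which lies in `convexHull 𝕜 s` unless all the weight stays on `x`.
  have hcomb : (c * b + d) • x = (c * b) • z + d • w := by
    linear_combination (norm := module) -hxeq + (c * hab + hcd) • x
  obtain ⟨v, hv, hvzw⟩ :=
    (convex_convexHull 𝕜 s).exists_mem_add_smul_eq hz hw (mul_nonneg hc hb) hd
  rcases (add_nonneg (mul_nonneg hc hb) hd).eq_or_lt with h0 | hpos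
  · have hd0 : d = 0 := by linarith [mul_nonneg hc hb]
    have hb0 : b = 0 := by
      have hc1 : c = 1 := by linarith
      simpa [hc1, hd0] using h0.symm
    have ha1 : a = 1 := by linarith
    exact hxy (by simp [ha1, hb0])
  · exact hx (smul_right_injective E hpos.ne' (hcomb.trans hvzw.symm) ▸ hv)

theorem convexHull_insert_inter_ssubset {P : Set E} (hxP : x ∈ P) (hx : x ∉ convexHull 𝕜 s)
    (hxy : x ≠ y) (hy : y ∈ convexHull 𝕜 (insert x s)) :
    convexHull 𝕜 (insert y s) ∩ P ⊂ convexHull 𝕜 (insert x s) ∩ P := by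
  refine ssubset_of_subset_not_subset (inter_subset_inter_left P ?_) fun hsub => ?_
  · exact convexHull_min (insert_subset hy ((subset_insert x s).trans (subset_convexHull 𝕜 _)))
      (convex_convexHull 𝕜 _)
  · exact notMem_convexHull_insert_of_mem_convexHull_insert hx hxy hy
      (hsub ⟨subset_convexHull 𝕜 _ (mem_insert x s), hxP⟩).1

end AntiExchange

/-- for a finite point set P ⊆ ℝ², the family
C_P = {C ⊆ P : conv(C) ∩ P = C} satisfies the extension axiom of convex
geometries: every proper convexly closed subset of P extends by one point of P
to a convexly closed set. -/
theorem convexGeometry_extension (P : Set (ℝ × ℝ)) (hP : P.Finite)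
    (C : Set (ℝ × ℝ)) (hCP : C ⊆ P) (hC : convexHull ℝ C ∩ P = C) (hne : C ≠ P) :
    ∃ x ∈ P \ C, convexHull ℝ (C ∪ {x}) ∩ P = C ∪ {x} := by
  simp only [union_singleton]
  have hPC : (P \ C).Nonempty := sdiff_nonempty.2 fun hPC => hne (hCP.antisymm hPC)
  -- A point whose one-point extension has the smallest closure; anti-exchange shows that
  -- this closure adds nothing beyond the point itself.
  obtain ⟨x, hx, hmin⟩ := exists_min_image (P \ C)
    (fun x => (convexHull ℝ (insert x C) ∩ P).ncard) hP.sdiff hPC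
  have hxC : x ∉ convexHull ℝ C := fun h => hx.2 (hC ▸ ⟨h, hx.1⟩)
  refine ⟨x, hx, subset_antisymm (fun y hy => ?_)
    (subset_inter (subset_convexHull ℝ _) (insert_subset hx.1 hCP))⟩
  by_contra hyxC
  obtain ⟨hyx, hyC⟩ : y ≠ x ∧ y ∉ C := by simpa only [mem_insert_iff, not_or] using hyxC
  have hlt := ncard_lt_ncard (convexHull_insert_inter_ssubset hx.1 hxC (Ne.symm hyx) hy.1)
    (hP.inter_of_right _)
  exact (hmin y ⟨hy.2, hyC⟩).not_gt hlt
end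

section
/- The order type of a planar point set determines its induced convex geometry: if two finite point sets P and Q in general position admit a bijection φ : P → Q preserving the orientation of every triple, then C ⊆ P satisfies conv(C) ∩ P = C if and only if φ(C) satisfies conv(φ(C)) ∩ Q = φ(C). -/
/-- The orientation of an ordered triple of planar points: the sign of the
determinant of the 3×3 matrix of homogeneous coordinates. -/
noncomputable def orient (p q r : ℝ × ℝ) : ℝ :=
  Real.sign (Matrix.det !![p.1, p.2, 1; q.1, q.2, 1; r.1, r.2, 1])

/-!
By Carathéodory, a point `p` of `P` in `conv C` lies in a triangle `abc` with vertices in `C`.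
Unless `p` is a vertex, general position makes `a, b, c` distinct and keeps `p` off the edges, and
then `p ∈ conv {a, b, c}` says exactly that `orient p b c`, `orient a p c` and `orient a b p` all
equal `orient a b c`. These equalities are carried over by `φ`, and back by its inverse, which
also preserves orientations; hence `p ∈ conv C ↔ φ p ∈ conv (φ C)` for every `p ∈ P`.
-/

open Set

def orientDet (a b c : ℝ × ℝ) : ℝ :=
  a.1 * b.2 - a.1 * c.2 - b.1 * a.2 + b.1 * c.2 + c.1 * a.2 - c.1 * b.2

lemma orient_eq_sign_orientDet (a b c : ℝ × ℝ) : orient a b c = Real.sign (orientDet a b c) := by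
  unfold orient orientDet
  congr 1
  simp [Matrix.det_fin_three]
  ring

lemma orient_ne_zero_iff {a b c : ℝ × ℝ} : orient a b c ≠ 0 ↔ orientDet a b c ≠ 0 := by
  rw [orient_eq_sign_orientDet, Ne, Real.sign_eq_zero_iff]

lemma Real.sign_eq_sign_iff_div_nonneg {x y : ℝ} (hx : x ≠ 0) (hy : y ≠ 0) :
    Real.sign x = Real.sign y ↔ 0 ≤ x / y := by
  rcases hx.lt_or_gt with hx | hx <;> rcases hy.lt_or_gt with hy | hy <;>
    simp [Real.sign_of_pos, Real.sign_of_neg, div_nonneg_iff, hx, hy, hx.le, hy.le, hx.not_ge,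
      hy.not_ge] <;> norm_num

lemma orientDet_eq_zero_of_mem_segment {a b p : ℝ × ℝ} (h : p ∈ segment ℝ a b) :
    orientDet a b p = 0 := by
  obtain ⟨u, v, -, -, huv, rfl⟩ := h
  obtain rfl : v = 1 - u := by linarith
  simp only [orientDet, Prod.fst_add, Prod.snd_add, Prod.smul_fst, Prod.smul_snd, smul_eq_mul]
  ring

/-- The barycentric coordinates of `p` with respect to a nondegenerate triangle `abc` are
ratios of oriented areas (Cramer's rule). -/
lemma mem_convexHull_triple_iff {a b c p : ℝ × ℝ} (h : orientDet a b c ≠ 0) :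
    p ∈ convexHull ℝ {a, b, c} ↔
      0 ≤ orientDet p b c / orientDet a b c ∧ 0 ≤ orientDet a p c / orientDet a b c ∧
        0 ≤ orientDet a b p / orientDet a b c := by
  constructor
  · intro hp
    rw [convexHull_insert ⟨b, by simp⟩, mem_convexJoin] at hp
    obtain ⟨a', rfl, z, hz, hpz⟩ := hp
    rw [convexHull_pair] at hz
    obtain ⟨s, t, hs, ht, hst, rfl⟩ := hz
    obtain ⟨u, v, hu, hv, huv, rfl⟩ := hpz
    obtain rfl : v = 1 - u := by linarith
    obtain rfl : t = 1 - s := by linarith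
    set q := u • a' + (1 - u) • (s • b + (1 - s) • c)
    obtain ⟨e₁, e₂, e₃⟩ : orientDet q b c = u * orientDet a' b c ∧
        orientDet a' q c = (1 - u) * s * orientDet a' b c ∧
        orientDet a' b q = (1 - u) * (1 - s) * orientDet a' b c := by
      refine ⟨?_, ?_, ?_⟩ <;>
        simp only [q, orientDet, Prod.fst_add, Prod.snd_add, Prod.smul_fst, Prod.smul_snd,
          smul_eq_mul] <;> ring
    rw [e₁, e₂, e₃, mul_div_cancel_right₀ _ h, mul_div_cancel_right₀ _ h,
      mul_div_cancel_right₀ _ h]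
    exact ⟨hu, by nlinarith, by nlinarith⟩
  · rintro ⟨hα, hβ, hγ⟩
    set D := orientDet a b c
    have hsum : orientDet p b c / D + orientDet a p c / D + orientDet a b p / D = 1 := by
      rw [← add_div, ← add_div, div_eq_one_iff_eq h]
      simp only [D, orientDet]
      ring
    have hp : (orientDet p b c / D) • a + (orientDet a p c / D) • b + (orientDet a b p / D) • c
        = p := by
      ext <;> simp only [Prod.fst_add, Prod.snd_add, Prod.smul_fst, Prod.smul_snd, smul_eq_mul] <;>
        field_simp <;> simp only [D, orientDet] <;> ring
    have := (convex_convexHull ℝ {a, b, c}).sum_mem (t := Finset.univ)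
      (w := ![orientDet p b c / D, orientDet a p c / D, orientDet a b p / D]) (z := ![a, b, c])
      (by simp [Fin.forall_fin_succ, hα, hβ, hγ]) (by simpa [Fin.sum_univ_three] using hsum)
      (fun i _ ↦ subset_convexHull ℝ _ (by fin_cases i <;> simp))
    simpa [Fin.sum_univ_three, hp] using this

lemma mem_convexHull_triple_iff_orient {a b c p : ℝ × ℝ} (habc : orient a b c ≠ 0)
    (hpbc : orient p b c ≠ 0) (hapc : orient a p c ≠ 0) (habp : orient a b p ≠ 0) :
    p ∈ convexHull ℝ {a, b, c} ↔
      orient p b c = orient a b c ∧ orient a p c = orient a b c ∧ orient a b p = orient a b c := by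
  rw [orient_ne_zero_iff] at habc hpbc hapc habp
  simp only [mem_convexHull_triple_iff habc, orient_eq_sign_orientDet,
    Real.sign_eq_sign_iff_div_nonneg hpbc habc, Real.sign_eq_sign_iff_div_nonneg hapc habc,
    Real.sign_eq_sign_iff_div_nonneg habp habc]

/-- Carathéodory's theorem in the plane. -/
lemma exists_mem_convexHull_triple {C : Set (ℝ × ℝ)} {p : ℝ × ℝ} (h : p ∈ convexHull ℝ C) :
    ∃ a ∈ C, ∃ b ∈ C, ∃ c ∈ C, p ∈ convexHull ℝ {a, b, c} := by
  rw [convexHull_eq_union] at h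
  simp only [mem_iUnion, exists_prop] at h
  obtain ⟨t, htC, hind, hpt⟩ := h
  have hcard : t.card ≤ 3 := by
    simpa using hind.card_le_finrank_succ.trans (Nat.succ_le_succ (Submodule.finrank_le _))
  interval_cases hc : t.card
  · simp_all [Finset.card_eq_zero]
  · obtain ⟨a, rfl⟩ := Finset.card_eq_one.mp hc
    exact ⟨a, htC (by simp), a, htC (by simp), a, htC (by simp), by simpa using hpt⟩
  · obtain ⟨a, b, -, rfl⟩ := Finset.card_eq_two.mp hc
    exact ⟨a, htC (by simp), b, htC (by simp), b, htC (by simp), by simpa using hpt⟩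
  · obtain ⟨a, b, c, -, -, -, rfl⟩ := Finset.card_eq_three.mp hc
    exact ⟨a, htC (by simp), b, htC (by simp), c, htC (by simp), by simpa using hpt⟩

def InGeneralPosition (P : Set (ℝ × ℝ)) : Prop :=
  ∀ p₁ ∈ P, ∀ p₂ ∈ P, ∀ p₃ ∈ P, p₁ ≠ p₂ → p₁ ≠ p₃ → p₂ ≠ p₃ → orient p₁ p₂ p₃ ≠ 0

def PreservesOrient (φ : ℝ × ℝ → ℝ × ℝ) (P : Set (ℝ × ℝ)) : Prop :=
  ∀ p₁ ∈ P, ∀ p₂ ∈ P, ∀ p₃ ∈ P, orient (φ p₁) (φ p₂) (φ p₃) = orient p₁ p₂ p₃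

namespace InGeneralPosition

variable {P : Set (ℝ × ℝ)} (hP : InGeneralPosition P)
include hP

lemma eq_or_eq_of_mem_segment {a b p : ℝ × ℝ} (ha : a ∈ P) (hb : b ∈ P) (hp : p ∈ P)
    (h : p ∈ segment ℝ a b) : p = a ∨ p = b := by
  by_contra! hne
  obtain rfl | hab := eq_or_ne a b
  · simp_all
  · exact hP a ha b hb p hp hab hne.1.symm hne.2.symm
      (by rw [orient_eq_sign_orientDet, orientDet_eq_zero_of_mem_segment h, Real.sign_zero])

lemma pairwise_ne_of_mem_convexHull_triple {a b c p : ℝ × ℝ} (ha : a ∈ P) (hb : b ∈ P)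
    (hc : c ∈ P) (hp : p ∈ P) (hpabc : p ∉ ({a, b, c} : Set (ℝ × ℝ)))
    (h : p ∈ convexHull ℝ {a, b, c}) : a ≠ b ∧ a ≠ c ∧ b ≠ c := by
  have hseg : ∀ x ∈ P, ∀ y ∈ P, p ∈ segment ℝ x y → p = x ∨ p = y := fun x hx y hy ↦
    hP.eq_or_eq_of_mem_segment hx hy hp
  refine ⟨?_, ?_, ?_⟩ <;> rintro rfl
  · have := hseg _ ha _ hc (by simpa [convexHull_pair] using h)
    simp_all
  · have := hseg _ hb _ ha (by simpa [convexHull_pair] using h)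
    simp_all
  · have := hseg _ ha _ hb (by simpa [convexHull_pair] using h)
    simp_all

lemma image {φ : ℝ × ℝ → ℝ × ℝ} (hφ : PreservesOrient φ P) : InGeneralPosition (φ '' P) := by
  rintro _ ⟨p₁, h₁, rfl⟩ _ ⟨p₂, h₂, rfl⟩ _ ⟨p₃, h₃, rfl⟩ h₁₂ h₁₃ h₂₃
  rw [hφ p₁ h₁ p₂ h₂ p₃ h₃]
  exact hP p₁ h₁ p₂ h₂ p₃ h₃ (ne_of_apply_ne φ h₁₂) (ne_of_apply_ne φ h₁₃) (ne_of_apply_ne φ h₂₃)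

end InGeneralPosition

lemma PreservesOrient.rightInvOn {φ ψ : ℝ × ℝ → ℝ × ℝ} {P Q : Set (ℝ × ℝ)}
    (hφ : PreservesOrient φ P) (hψ : MapsTo ψ Q P) (hinv : RightInvOn ψ φ Q) :
    PreservesOrient ψ Q := by
  intro q₁ h₁ q₂ h₂ q₃ h₃
  rw [← hφ _ (hψ h₁) _ (hψ h₂) _ (hψ h₃), hinv h₁, hinv h₂, hinv h₃]

lemma mem_convexHull_image_of_mem_convexHull {P C : Set (ℝ × ℝ)} {φ : ℝ × ℝ → ℝ × ℝ}
    {p : ℝ × ℝ} (hP : InGeneralPosition P) (hφ : PreservesOrient φ P) (hC : C ⊆ P) (hp : p ∈ P)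
    (h : p ∈ convexHull ℝ C) : φ p ∈ convexHull ℝ (φ '' C) := by
  obtain ⟨a, ha, b, hb, c, hc, hpabc⟩ := exists_mem_convexHull_triple h
  have hsub : ({φ a, φ b, φ c} : Set (ℝ × ℝ)) ⊆ φ '' C := by
    rintro _ (rfl | rfl | rfl) <;> exact mem_image_of_mem φ ‹_›
  refine convexHull_mono hsub ?_
  by_cases hp_mem : p ∈ ({a, b, c} : Set (ℝ × ℝ))
  · exact subset_convexHull ℝ _ (by rcases hp_mem with rfl | rfl | rfl <;> simp)
  obtain ⟨hpa, hpb, hpc⟩ : p ≠ a ∧ p ≠ b ∧ p ≠ c := by simpa using hp_mem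
  obtain ⟨hab, hac, hbc⟩ :=
    hP.pairwise_ne_of_mem_convexHull_triple (hC ha) (hC hb) (hC hc) hp hp_mem hpabc
  replace ha := hC ha
  replace hb := hC hb
  replace hc := hC hc
  have eabc := hφ a ha b hb c hc
  have epbc := hφ p hp b hb c hc
  have eapc := hφ a ha p hp c hc
  have eabp := hφ a ha b hb p hp
  have habc := hP a ha b hb c hc hab hac hbc
  have hpbc := hP p hp b hb c hc hpb hpc hbc
  have hapc := hP a ha p hp c hc hpa.symm hac hpc
  have habp := hP a ha b hb p hp hab hpa.symm hpb.symm
  rw [mem_convexHull_triple_iff_orient habc hpbc hapc habp] at hpabc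
  rwa [mem_convexHull_triple_iff_orient (eabc ▸ habc) (epbc ▸ hpbc) (eapc ▸ hapc) (eabp ▸ habp),
    eabc, epbc, eapc, eabp]

lemma mem_convexHull_image_iff {P C : Set (ℝ × ℝ)} {φ : ℝ × ℝ → ℝ × ℝ} {p : ℝ × ℝ}
    (hP : InGeneralPosition P) (hφ : PreservesOrient φ P) (hinj : InjOn φ P) (hC : C ⊆ P)
    (hp : p ∈ P) : φ p ∈ convexHull ℝ (φ '' C) ↔ p ∈ convexHull ℝ C := by
  refine ⟨fun h ↦ ?_, mem_convexHull_image_of_mem_convexHull hP hφ hC hp⟩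
  have hsurj : SurjOn φ P (φ '' P) := surjOn_image φ P
  have hψ := hφ.rightInvOn hsurj.mapsTo_invFunOn hsurj.rightInvOn_invFunOn
  have := mem_convexHull_image_of_mem_convexHull (hP.image hφ) hψ (image_mono hC)
    (mem_image_of_mem φ hp) h
  rwa [hinj.invFunOn_image hC, hinj.leftInvOn_invFunOn hp] at this

lemma convexHull_inter_eq_iff {E : Type*} [AddCommGroup E] [Module ℝ E] {P C : Set E}
    (hC : C ⊆ P) : convexHull ℝ C ∩ P = C ↔ ∀ p ∈ P, p ∈ convexHull ℝ C → p ∈ C := by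
  refine ⟨fun h p hp hpC ↦ h ▸ ⟨hpC, hp⟩, fun h ↦ ?_⟩
  exact Subset.antisymm (fun p ⟨hpC, hp⟩ ↦ h p hp hpC) (subset_inter (subset_convexHull ℝ C) hC)

theorem orderType_determines_convexGeometry_general (P Q : Set (ℝ × ℝ))
    (hPgen : ∀ p₁ ∈ P, ∀ p₂ ∈ P, ∀ p₃ ∈ P,
      p₁ ≠ p₂ → p₁ ≠ p₃ → p₂ ≠ p₃ → orient p₁ p₂ p₃ ≠ 0)
    (φ : (ℝ × ℝ) → (ℝ × ℝ)) (hφ : Set.BijOn φ P Q)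
    (hor : ∀ p₁ ∈ P, ∀ p₂ ∈ P, ∀ p₃ ∈ P,
      orient (φ p₁) (φ p₂) (φ p₃) = orient p₁ p₂ p₃)
    (C : Set (ℝ × ℝ)) (hC : C ⊆ P) :
    convexHull ℝ C ∩ P = C ↔ convexHull ℝ (φ '' C) ∩ Q = φ '' C := by
  obtain rfl := hφ.image_eq
  rw [convexHull_inter_eq_iff hC, convexHull_inter_eq_iff (image_mono hC), forall_mem_image]
  refine forall₂_congr fun p hp ↦ ?_
  rw [mem_convexHull_image_iff hPgen hor hφ.injOn hC hp, hφ.injOn.mem_image_iff hC hp]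

/-- the order type determines the induced convex geometry.
If two finite planar point sets in general position are related by an
orientation-preserving bijection φ, then a subset C of P is convexly closed
iff its image φ(C) is convexly closed. -/
theorem orderType_determines_convexGeometry (P Q : Set (ℝ × ℝ))
    (hPfin : P.Finite) (hQfin : Q.Finite)
    (hPgen : ∀ p₁ ∈ P, ∀ p₂ ∈ P, ∀ p₃ ∈ P,
      p₁ ≠ p₂ → p₁ ≠ p₃ → p₂ ≠ p₃ → orient p₁ p₂ p₃ ≠ 0)
    (hQgen : ∀ q₁ ∈ Q, ∀ q₂ ∈ Q, ∀ q₃ ∈ Q,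
      q₁ ≠ q₂ → q₁ ≠ q₃ → q₂ ≠ q₃ → orient q₁ q₂ q₃ ≠ 0)
    (φ : (ℝ × ℝ) → (ℝ × ℝ)) (hφ : Set.BijOn φ P Q)
    (hor : ∀ p₁ ∈ P, ∀ p₂ ∈ P, ∀ p₃ ∈ P,
      orient (φ p₁) (φ p₂) (φ p₃) = orient p₁ p₂ p₃)
    (C : Set (ℝ × ℝ)) (hC : C ⊆ P) :
    convexHull ℝ C ∩ P = C ↔ convexHull ℝ (φ '' C) ∩ Q = φ '' C :=
  orderType_determines_convexGeometry_general P Q hPgen φ hφ hor C hC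
end

section
/- In a double ring configuration D_{2k} (k ≥ 2), for each index i, the set C = {r_i} ∪ {r_{i+1}, r'_{i+1}, …, r_{i+(k-1)}, r'_{i+(k-1)}} (indices mod 2k appropriately) is convexly closed: conv(C) ∩ D_{2k} = C. -/
/-!
Put `r i` at angle `θ₀`. The set `C` consists of points at the angles `θ₀ + π m / k`, `0 ≤ m < k`,
so it lies strictly on the positive side of the direction bisecting that arc, while every other
point of the double ring lies on the negative side; a linear functional therefore separates all
`r (i + m)`, `r' (i + m)` with `m ≥ k` from `conv C`. The only remaining point is `r' i`. Measured
along the direction `θ₀ + α` with `α = π / 2 - π / (4 k)`, `r' i` has the smallest component among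
`C ∪ {r' i}`: `r i` lies further out on the same ray, and the other points of `C` make an angle
less than `α` with that direction and have radius at least that of `r' i`.
-/

open Real

lemma notMem_convexHull_of_forall_lt {𝕜 E : Type*} [Field 𝕜] [LinearOrder 𝕜] [IsStrictOrderedRing 𝕜]
    [AddCommGroup E] [Module 𝕜 E] (f : E →ₗ[𝕜] 𝕜) {s : Set E} {c : 𝕜} {y : E}
    (hs : ∀ x ∈ s, c < f x) (hy : f y ≤ c) : y ∉ convexHull 𝕜 s := fun h =>
  (not_lt.2 hy) (convexHull_min hs (convex_halfSpace_gt f.isLinear c) h)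

noncomputable def dirComponent (β : ℝ) : ℝ × ℝ →ₗ[ℝ] ℝ :=
  cos β • LinearMap.fst ℝ ℝ ℝ + sin β • LinearMap.snd ℝ ℝ ℝ

lemma dirComponent_polarCoord_symm (β ρ φ : ℝ) :
    dirComponent β (polarCoord.symm (ρ, φ)) = ρ * cos (φ - β) := by
  simp only [dirComponent, polarCoord_symm_apply, LinearMap.add_apply, LinearMap.smul_apply,
    LinearMap.fst_apply, LinearMap.snd_apply, smul_eq_mul, cos_sub]
  ring

lemma polarCoord_symm_two_pi_mul_val_add {n : ℕ} [NeZero n] (ρ : ℝ) (i : ZMod n) (m : ℕ) :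
    polarCoord.symm (ρ, 2 * π * (i + m : ZMod n).val / n) =
      polarCoord.symm (ρ, 2 * π * i.val / n + 2 * π * m / n) := by
  have hn : (n : ℝ) ≠ 0 := Nat.cast_ne_zero.2 (NeZero.ne n)
  have hval : ((i + m : ZMod n).val : ℝ) = i.val + m - n * ((i.val + m) / n : ℕ) := by
    rw [ZMod.val_add, ZMod.val_natCast, Nat.add_mod_mod, eq_sub_iff_add_eq]
    exact_mod_cast Nat.mod_add_div _ _
  have hangle : 2 * π * (i + m : ZMod n).val / n =
      2 * π * i.val / n + 2 * π * m / n - ((i.val + m) / n : ℕ) * (2 * π) := by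
    rw [hval]; field_simp
  rw [polarCoord_symm_apply, polarCoord_symm_apply, hangle, cos_sub_nat_mul_two_pi,
    sin_sub_nat_mul_two_pi]

section HalfRing

variable {k : ℕ} {ρ ρ' θ₀ : ℝ}

/-- The set `C` of the statement, with `r i` at radius `ρ` and angle `θ₀` and the inner ring at
radius `ρ'`. -/
def halfRing (k : ℕ) (ρ ρ' θ₀ : ℝ) : Set (ℝ × ℝ) :=
  {polarCoord.symm (ρ, θ₀)} ∪ ⋃ m ∈ Finset.Icc 1 (k - 1),
    {polarCoord.symm (ρ, θ₀ + π * m / k), polarCoord.symm (ρ', θ₀ + π * m / k)}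

lemma cos_pi_mul_div_sub_bisector_pos {m : ℕ} (hm : m < k) : 0 < cos (π * m / k - π * (k - 1) / (2 * k)) := by
  have hk : (0 : ℝ) < k := by exact_mod_cast (m.zero_le.trans_lt hm)
  have hm' : (m : ℝ) + 1 ≤ k := by exact_mod_cast hm
  have hx : π * m / k - π * (k - 1) / (2 * k) = π * (2 * m + 1 - k) / (2 * k) := by
    field_simp; ring
  rw [hx]
  apply cos_pos_of_mem_Ioo
  constructor
  · rw [lt_div_iff₀ (by positivity)]; nlinarith [pi_pos, (m.cast_nonneg : (0:ℝ) ≤ m)]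
  · rw [div_lt_iff₀ (by positivity)]; nlinarith [pi_pos]

lemma cos_pi_mul_div_sub_bisector_neg {m : ℕ} (hkm : k ≤ m) (hm : m < 2 * k) :
    cos (π * m / k - π * (k - 1) / (2 * k)) < 0 := by
  have hk : (0 : ℝ) < k := by exact_mod_cast (show 0 < k by omega)
  have hkm' : (k : ℝ) ≤ m := by exact_mod_cast hkm
  have hm' : (m : ℝ) + 1 ≤ 2 * k := by exact_mod_cast hm
  have hx : π * m / k - π * (k - 1) / (2 * k) = π * (2 * m + 1 - k) / (2 * k) := by
    field_simp; ring
  rw [hx]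
  apply cos_neg_of_pi_div_two_lt_of_lt
  · rw [lt_div_iff₀ (by positivity)]; nlinarith [pi_pos]
  · rw [div_lt_iff₀ (by positivity)]; nlinarith [pi_pos]

lemma cos_lt_cos_pi_mul_div_sub {m : ℕ} (hm0 : 0 < m) (hm : m < k) :
    cos (π / 2 - π / (4 * k)) < cos (π * m / k - (π / 2 - π / (4 * k))) := by
  have hk : (0 : ℝ) < k := by exact_mod_cast (m.zero_le.trans_lt hm)
  have hm0' : (1 : ℝ) ≤ m := by exact_mod_cast hm0
  have hm' : (m : ℝ) + 1 ≤ k := by exact_mod_cast hm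
  have hlo : π / k ≤ π * m / k := by gcongr; exact le_mul_of_one_le_right pi_pos.le hm0'
  have hhi : π * m / k ≤ π - π / k := by
    rw [le_sub_iff_add_le, ← add_div, div_le_iff₀ hk]; nlinarith [pi_pos]
  have hquarter : π / (4 * k) = π / k / 4 := by ring
  have hpos : 0 < π / k := by positivity
  rw [← cos_abs (π * m / k - _)]
  apply cos_lt_cos_of_nonneg_of_le_pi (abs_nonneg _)
  · linarith
  · rw [abs_sub_lt_iff]; constructor <;> linarith

lemma forall_mem_halfRing {P : ℝ × ℝ → Prop} (hP₀ : P (polarCoord.symm (ρ, θ₀)))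
    (hP : ∀ m : ℕ, 0 < m → m < k → ∀ σ, σ = ρ ∨ σ = ρ' → P (polarCoord.symm (σ, θ₀ + π * m / k))) :
    ∀ x ∈ halfRing k ρ ρ' θ₀, P x := by
  rintro x (rfl | hx)
  · exact hP₀
  · simp only [Set.mem_iUnion, Finset.mem_Icc, Set.mem_insert_iff, Set.mem_singleton_iff] at hx
    obtain ⟨m, ⟨hm₀, hm⟩, rfl | rfl⟩ := hx
    · exact hP m hm₀ (by omega) ρ (.inl rfl)
    · exact hP m hm₀ (by omega) ρ' (.inr rfl)

lemma polarCoord_symm_notMem_convexHull_halfRing_of_le (hρ : 0 < ρ) (hρ' : 0 < ρ') {σ : ℝ}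
    (hσ : 0 ≤ σ) {m : ℕ} (hkm : k ≤ m) (hm : m < 2 * k) :
    polarCoord.symm (σ, θ₀ + π * m / k) ∉ convexHull ℝ (halfRing k ρ ρ' θ₀) := by
  apply notMem_convexHull_of_forall_lt (dirComponent (θ₀ + π * (k - 1) / (2 * k))) (c := 0)
  · apply forall_mem_halfRing
    · rw [dirComponent_polarCoord_symm, sub_add_cancel_left, cos_neg]
      simpa using mul_pos hρ (cos_pi_mul_div_sub_bisector_pos (m := 0) (by omega : 0 < k))
    · intro m _ hm σ hσ
      rw [dirComponent_polarCoord_symm, add_sub_add_left_eq_sub]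
      exact mul_pos (by rcases hσ with rfl | rfl <;> assumption) (cos_pi_mul_div_sub_bisector_pos hm)
  · rw [dirComponent_polarCoord_symm, add_sub_add_left_eq_sub]
    exact mul_nonpos_of_nonneg_of_nonpos hσ (cos_pi_mul_div_sub_bisector_neg hkm hm).le

lemma polarCoord_symm_inner_notMem_convexHull_halfRing (hk : 0 < k) (hρ' : 0 < ρ') (hρ : ρ' < ρ) :
    polarCoord.symm (ρ', θ₀) ∉ convexHull ℝ (halfRing k ρ ρ' θ₀) := by
  have hα : 0 < cos (π / 2 - π / (4 * k)) := by
    have : π / (4 * k) ≤ π / 4 :=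
      div_le_div_of_nonneg_left pi_pos.le four_pos (by norm_cast; omega)
    have : 0 < π / (4 * k) := by positivity
    apply cos_pos_of_mem_Ioo
    constructor <;> linarith [pi_pos]
  set α := π / 2 - π / (4 * k)
  apply notMem_convexHull_of_forall_lt (dirComponent (θ₀ + α)) (c := ρ' * cos α)
  · apply forall_mem_halfRing
    · rw [dirComponent_polarCoord_symm, sub_add_cancel_left, cos_neg]
      exact mul_lt_mul_of_pos_right hρ hα
    · intro m hm₀ hm σ hσ
      have hσ' : ρ' ≤ σ := by rcases hσ with rfl | rfl <;> linarith
      have hcos := cos_lt_cos_pi_mul_div_sub hm₀ hm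
      rw [dirComponent_polarCoord_symm, add_sub_add_left_eq_sub]
      calc ρ' * cos α < ρ' * cos (π * m / k - α) := mul_lt_mul_of_pos_left hcos hρ'
        _ ≤ σ * cos (π * m / k - α) := mul_le_mul_of_nonneg_right hσ' (hα.trans hcos).le
  · rw [dirComponent_polarCoord_symm, sub_add_cancel_left, cos_neg]

lemma mem_halfRing_of_mem_convexHull (hρ' : 0 < ρ') (hρ : ρ' < ρ) {σ : ℝ} (hσ : σ = ρ ∨ σ = ρ')
    {m : ℕ} (hm : m < 2 * k)
    (h : polarCoord.symm (σ, θ₀ + π * m / k) ∈ convexHull ℝ (halfRing k ρ ρ' θ₀)) :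
    polarCoord.symm (σ, θ₀ + π * m / k) ∈ halfRing k ρ ρ' θ₀ := by
  obtain hmk | hkm := lt_or_ge m k
  · obtain rfl | hm₀ := m.eq_zero_or_pos
    · obtain rfl | rfl := hσ
      · simp [halfRing]
      · simp only [CharP.cast_eq_zero, mul_zero, zero_div, add_zero] at h ⊢
        exact absurd h (polarCoord_symm_inner_notMem_convexHull_halfRing (by omega) hρ' hρ)
    · refine Or.inr (Set.mem_iUnion₂.2 ⟨m, Finset.mem_Icc.2 ⟨hm₀, by omega⟩, ?_⟩)
      obtain rfl | rfl := hσ <;> simp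
  · exact absurd h (polarCoord_symm_notMem_convexHull_halfRing_of_le (hρ'.trans hρ) hρ'
      (by obtain rfl | rfl := hσ <;> linarith) hkm hm)

end HalfRing

theorem doubleRing_convex_set_general (k : ℕ) (hk : 2 ≤ k) (R ε : ℝ)
    (hε : 0 < ε) (hεR : ε < R)
    (r r' : ZMod (2 * k) → ℝ × ℝ)
    (hr : ∀ j : ZMod (2 * k),
      r j = (R * Real.cos (2 * Real.pi * (j.val : ℝ) / (2 * k)),
             R * Real.sin (2 * Real.pi * (j.val : ℝ) / (2 * k))))
    (hr' : ∀ j : ZMod (2 * k),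
      r' j = ((R - ε) * Real.cos (2 * Real.pi * (j.val : ℝ) / (2 * k)),
              (R - ε) * Real.sin (2 * Real.pi * (j.val : ℝ) / (2 * k))))
    (i : ZMod (2 * k)) :
    convexHull ℝ
        ({r i} ∪ ⋃ m ∈ Finset.Icc 1 (k - 1),
          ({r (i + (m : ZMod (2 * k))), r' (i + (m : ZMod (2 * k)))} : Set (ℝ × ℝ))) ∩
        (Set.range r ∪ Set.range r') =
      {r i} ∪ ⋃ m ∈ Finset.Icc 1 (k - 1),
        ({r (i + (m : ZMod (2 * k))), r' (i + (m : ZMod (2 * k)))} : Set (ℝ × ℝ)) := by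
  have : NeZero (2 * k) := ⟨by omega⟩
  set θ₀ := 2 * π * i.val / (2 * k) with hθ₀
  have hpolar (m : ℕ) : r (i + m) = polarCoord.symm (R, θ₀ + π * m / k) ∧
      r' (i + m) = polarCoord.symm (R - ε, θ₀ + π * m / k) := by
    have hangle : 2 * π * i.val / (2 * k) + 2 * π * m / (2 * k) = θ₀ + π * m / k := by
      rw [hθ₀]; field_simp
    have key (ρ : ℝ) :
        polarCoord.symm (ρ, 2 * π * (i + m : ZMod (2 * k)).val / (2 * k)) =
          polarCoord.symm (ρ, θ₀ + π * m / k) := by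
      rw [← hangle]; exact_mod_cast polarCoord_symm_two_pi_mul_val_add ρ i m
    rw [hr, hr', ← key, ← key]
    exact ⟨(polarCoord_symm_apply (R, _)).symm, (polarCoord_symm_apply (R - ε, _)).symm⟩
  have hri : r i = polarCoord.symm (R, θ₀) := by simpa using (hpolar 0).1
  have hC : ({r i} ∪ ⋃ m ∈ Finset.Icc 1 (k - 1),
      ({r (i + (m : ZMod (2 * k))), r' (i + (m : ZMod (2 * k)))} : Set (ℝ × ℝ))) =
      halfRing k R (R - ε) θ₀ := by
    simp only [halfRing, hri, hpolar]
  refine subset_antisymm ?_ (Set.subset_inter (subset_convexHull ℝ _) ?_)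
  · rw [hC]
    rintro _ ⟨hx, ⟨j, rfl⟩ | ⟨j, rfl⟩⟩ <;>
    · obtain ⟨m, hm, rfl⟩ : ∃ m < 2 * k, j = i + m := ⟨(j - i).val, ZMod.val_lt _, by simp⟩
      simp only [(hpolar m).1, (hpolar m).2] at hx ⊢
      exact mem_halfRing_of_mem_convexHull (by linarith) (by linarith) (by simp) hm hx
  · rintro x (rfl | hx)
    · exact .inl ⟨i, rfl⟩
    · simp only [Set.mem_iUnion, Set.mem_insert_iff, Set.mem_singleton_iff] at hx
      obtain ⟨m, -, rfl | rfl⟩ := hx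
      exacts [.inl ⟨_, rfl⟩, .inr ⟨_, rfl⟩]

/-- in the double ring D_{2k} (k ≥ 2), for each index i the set
C = {r_i} ∪ {r_{i+1}, r'_{i+1}, …, r_{i+(k-1)}, r'_{i+(k-1)}} is convexly
closed: conv(C) ∩ D_{2k} = C. -/
theorem doubleRing_convex_set (k : ℕ) (hk : 2 ≤ k) (R ε : ℝ)
    (hR : 0 < R) (hε : 0 < ε) (hεR : ε < R)
    (r r' : ZMod (2 * k) → ℝ × ℝ)
    (hr : ∀ j : ZMod (2 * k),
      r j = (R * Real.cos (2 * Real.pi * (j.val : ℝ) / (2 * k)),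
             R * Real.sin (2 * Real.pi * (j.val : ℝ) / (2 * k))))
    (hr' : ∀ j : ZMod (2 * k),
      r' j = ((R - ε) * Real.cos (2 * Real.pi * (j.val : ℝ) / (2 * k)),
              (R - ε) * Real.sin (2 * Real.pi * (j.val : ℝ) / (2 * k))))
    (hvertex : ∀ j : ZMod (2 * k),
      r' j ∉ convexHull ℝ ((Set.range r ∪ Set.range r') \ {r j, r' j}))
    (i : ZMod (2 * k)) :
    convexHull ℝ
        ({r i} ∪ ⋃ m ∈ Finset.Icc 1 (k - 1),
          ({r (i + (m : ZMod (2 * k))), r' (i + (m : ZMod (2 * k)))} : Set (ℝ × ℝ))) ∩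
        (Set.range r ∪ Set.range r') =
      {r i} ∪ ⋃ m ∈ Finset.Icc 1 (k - 1),
        ({r (i + (m : ZMod (2 * k))), r' (i + (m : ZMod (2 * k)))} : Set (ℝ × ℝ)) :=
  doubleRing_convex_set_general k hk R ε hε hεR r r' hr hr' i
end

section
/- In the double ring convex geometry (D_{2k}, C_{2k}), any convexly closed set C containing r_i but not r'_i that is inclusion-wise maximal with this property equals either {r_i} ∪ {r_{i+1}, r'_{i+1}, …, r_{i+(k-1)}, r'_{i+(k-1)}} or {r_i} ∪ {r_{i-1}, r'_{i-1}, …, r_{i-(k-1)}, r'_{i-(k-1)}}. -/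
/-!
The point `r'_i` lies on the segment from `r_i` to either antipodal point. Since the vertex
hypothesis at `r'_i` forces `R cos (π / k) ≤ R - ε`, it also lies in the triangle spanned by `r_i`
and any two points of `D_{2k}` on opposite sides of the line through `0` and `r_i`: the segment
joining them meets that line at distance at most `R - ε` in the direction of `r_i`. So a convexly closed set containing
`r_i` but not `r'_i` lies in one of the two half-turns `{r_i} ∪ {r_{i±m}, r'_{i±m} : 0 < m < k}`.
Each half-turn is the trace on `D_{2k}` of a half-plane bounded by a steep line through `r_i`, so
it is convexly closed itself, and maximality forces equality.
-/

open Real Set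

noncomputable def polar (ρ φ : ℝ) : ℝ × ℝ := (ρ * cos φ, ρ * sin φ)

lemma polar_add_int_mul_two_pi (ρ φ : ℝ) (n : ℤ) : polar ρ (φ + n * (2 * π)) = polar ρ φ := by
  simp only [polar, cos_add_int_mul_two_pi, sin_add_int_mul_two_pi]

lemma polar_add_pi (ρ φ : ℝ) : polar ρ (φ + π) = polar (-ρ) φ := by
  simp only [polar, cos_add_pi, sin_add_pi, neg_mul, mul_neg]

lemma polar_mem_segment {a b t : ℝ} (φ : ℝ) (ha : a ≤ t) (hb : t ≤ b) :
    polar t φ ∈ segment ℝ (polar a φ) (polar b φ) := by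
  have hf : ∀ ρ, polar ρ φ = LinearMap.toSpanSingleton ℝ (ℝ × ℝ) (cos φ, sin φ) ρ := fun ρ => by
    simp [polar]
  simp only [hf, ← LinearMap.coe_toAffineMap, ← image_segment]
  exact mem_image_of_mem _ (by rw [segment_eq_Icc (ha.trans hb)]; exact ⟨ha, hb⟩)

lemma polar_mem_convexHull_of_le {s : Set (ℝ × ℝ)} {a b t φ : ℝ}
    (ha : polar a φ ∈ convexHull ℝ s) (hb : polar b φ ∈ convexHull ℝ s) (hat : a ≤ t)
    (htb : t ≤ b) :
    polar t φ ∈ convexHull ℝ s :=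
  (convex_convexHull ℝ s).segment_subset ha hb (polar_mem_segment φ hat htb)

lemma smul_polar_add_smul_polar {a b ρ₁ ρ₂ θ α β : ℝ}
    (h : a * (ρ₁ * sin α) + b * (ρ₂ * sin β) = 0) :
    a • polar ρ₁ (θ + α) + b • polar ρ₂ (θ + β) =
      polar (a * (ρ₁ * cos α) + b * (ρ₂ * cos β)) θ := by
  simp only [polar, cos_add, sin_add, Prod.smul_mk, smul_eq_mul, Prod.mk_add_mk, Prod.mk.injEq]
  constructor
  · linear_combination (-sin θ) * h
  · linear_combination (cos θ) * h

lemma exists_polar_le_max_mem_convexHull {s : Set (ℝ × ℝ)} {ρ₁ ρ₂ θ α β : ℝ}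
    (h₁ : polar ρ₁ (θ + α) ∈ convexHull ℝ s) (h₂ : polar ρ₂ (θ + β) ∈ convexHull ℝ s)
    (hα : 0 < ρ₁ * sin α) (hβ : ρ₂ * sin β < 0) :
    ∃ c ≤ max (ρ₁ * cos α) (ρ₂ * cos β), polar c θ ∈ convexHull ℝ s := by
  set d := ρ₁ * sin α - ρ₂ * sin β
  have hd : 0 < d := by linarith
  have ha : 0 ≤ -(ρ₂ * sin β) / d := div_nonneg (by linarith) hd.le
  have hb : 0 ≤ ρ₁ * sin α / d := div_nonneg hα.le hd.le
  have hab : -(ρ₂ * sin β) / d + ρ₁ * sin α / d = 1 := by field_simp; ring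
  have hmem := convex_convexHull ℝ s h₁ h₂ ha hb hab
  rw [smul_polar_add_smul_polar (by field_simp; ring)] at hmem
  refine ⟨_, ?_, hmem⟩
  calc _ ≤ -(ρ₂ * sin β) / d * max (ρ₁ * cos α) (ρ₂ * cos β)
          + ρ₁ * sin α / d * max (ρ₁ * cos α) (ρ₂ * cos β) := by gcongr <;> simp
    _ = max (ρ₁ * cos α) (ρ₂ * cos β) := by rw [← add_mul, hab, one_mul]

/-- `a x' + b y'`, where `(x', y')` are the coordinates of `x` in the frame rotated by `θ`. -/
noncomputable def frameFun (θ a b : ℝ) (x : ℝ × ℝ) : ℝ :=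
  (a * cos θ - b * sin θ) * x.1 + (a * sin θ + b * cos θ) * x.2

lemma frameFun_polar (θ a b ρ γ : ℝ) :
    frameFun θ a b (polar ρ (θ + γ)) = ρ * (a * cos γ + b * sin γ) := by
  simp only [frameFun, polar, cos_add, sin_add]
  linear_combination (ρ * (a * cos γ + b * sin γ)) * sin_sq_add_cos_sq θ

lemma convex_frameFun_le (θ a b c : ℝ) : Convex ℝ {x | frameFun θ a b x ≤ c} :=
  convex_halfSpace_le ⟨fun x y => by simp only [frameFun, Prod.fst_add, Prod.snd_add]; ring,
    fun t x => by simp only [frameFun, Prod.smul_fst, Prod.smul_snd, smul_eq_mul]; ring⟩ c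

lemma convexHull_inter_eq_of_eq_inter {𝕜 E : Type*} [Field 𝕜] [LinearOrder 𝕜]
    [IsStrictOrderedRing 𝕜] [AddCommGroup E] [Module 𝕜 E] {S D H : Set E}
    (hH : Convex 𝕜 H) (hS : S = D ∩ H) : convexHull 𝕜 S ∩ D = S := by
  refine Subset.antisymm (fun x ⟨hxS, hxD⟩ => ?_)
    fun x hx => ⟨subset_convexHull 𝕜 S hx, (hS ▸ hx).1⟩
  rw [hS]
  exact ⟨hxD, convexHull_min (hS ▸ inter_subset_right) hH hxS⟩

lemma sin_pi_div_le_sin_mul {k : ℕ} {j : ℤ} (hj : 0 < j) (hjk : j < k) :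
    sin (π / k) ≤ sin (j * (π / k)) := by
  have hk : (0 : ℝ) < k := by exact_mod_cast (hj.trans hjk)
  have h1 : (1 : ℝ) ≤ j := by exact_mod_cast hj
  have h2 : (j : ℝ) + 1 ≤ k := by exact_mod_cast hjk
  have hδ : 0 < π / k := by positivity
  have hkδ : k * (π / k) = π := by field_simp
  rw [← sub_nonneg, sin_sub_sin]
  refine mul_nonneg (mul_nonneg zero_le_two (sin_nonneg_of_nonneg_of_le_pi ?_ ?_))
    (cos_nonneg_of_mem_Icc ⟨?_, ?_⟩) <;> nlinarith

lemma cos_mul_le_cos_pi_div {k : ℕ} {j : ℤ} (hj : 0 < j) (hjk : j < k) :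
    cos (j * (π / k)) ≤ cos (π / k) := by
  have hk : (0 : ℝ) < k := by exact_mod_cast (hj.trans hjk)
  have h1 : (1 : ℝ) ≤ j := by exact_mod_cast hj
  have h2 : (j : ℝ) ≤ k := by exact_mod_cast hjk.le
  have hkδ : k * (π / k) = π := by field_simp
  exact cos_le_cos_of_nonneg_of_le_pi (by positivity) (by nlinarith [pi_pos])
    (by nlinarith [pi_pos])

lemma sin_mul_pi_div_pos {k : ℕ} {j : ℤ} (hj : 0 < j) (hjk : j < k) :
    0 < sin (j * (π / k)) := by
  have hk : (0 : ℝ) < k := by exact_mod_cast (hj.trans hjk)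
  have h1 : (0 : ℝ) < j := by exact_mod_cast hj
  have h2 : (j : ℝ) < k := by exact_mod_cast hjk
  have hkδ : k * (π / k) = π := by field_simp
  exact sin_pos_of_pos_of_lt_pi (by positivity) (by nlinarith [pi_pos])

lemma neg_cos_sub_mul_sin_le_iff {k : ℕ} {R ε M ρ : ℝ} (hε : 0 < ε) (hεR : ε < R)
    (hM : 2 * R ≤ M * ((R - ε) * sin (π / k))) (hρ : ρ ∈ ({R, R - ε} : Set ℝ)) {m : ℤ}
    (hm : -k ≤ m) (hm' : m ≤ k) :
    ρ * (-cos (m * (π / k)) - M * sin (m * (π / k))) ≤ -R ↔ (m = 0 ∧ ρ = R) ∨ (0 < m ∧ m < k) := by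
  have hρR : R - ε ≤ ρ ∧ ρ ≤ R := by rcases hρ with rfl | rfl <;> constructor <;> linarith
  have hdom : ∀ j : ℤ, 0 < j → j < k → 2 * R ≤ ρ * M * sin (j * (π / k)) := fun j hj hjk => by
    have h1 := sin_mul_pi_div_pos (k := k) one_pos (by omega)
    have h2 := sin_pi_div_le_sin_mul hj hjk
    push_cast at h1
    rw [one_mul] at h1
    have hP : 0 < (R - ε) * sin (π / k) := mul_pos (by linarith) h1
    have hM0 : 0 < M := by by_contra! h; nlinarith
    calc 2 * R ≤ M * ((R - ε) * sin (π / k)) := hM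
      _ ≤ M * (ρ * sin (j * (π / k))) := by gcongr <;> linarith
      _ = ρ * M * sin (j * (π / k)) := by ring
  have hcos := neg_one_le_cos (m * (π / k))
  have hcos' := cos_le_one (m * (π / k))
  rcases lt_trichotomy m 0 with hneg | rfl | hpos
  · simp only [hneg.ne, false_and, hneg.not_gt, false_and, or_self, iff_false, not_le]
    rcases hm.lt_or_eq with hmk | hmk
    · have hs := hdom (-m) (by omega) (by omega)
      push_cast at hs
      rw [neg_mul, sin_neg] at hs
      nlinarith
    · have hk : (k : ℝ) ≠ 0 := by norm_cast; omega
      have hπ : (m : ℝ) * (π / k) = -π := by rw [← hmk]; push_cast; field_simp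
      rw [hπ, cos_neg, sin_neg, cos_pi, sin_pi]
      linarith
  · simp only [Int.cast_zero, zero_mul, cos_zero, sin_zero, true_and, lt_irrefl, false_and,
      or_false]
    rcases hρ with rfl | rfl <;> constructor <;> intro h <;> linarith
  · simp only [hpos.ne', false_and, hpos, true_and, false_or]
    rcases hm'.lt_or_eq with hmk | hmk
    · simp only [hmk, iff_true]
      nlinarith [hdom m hpos hmk]
    · have hk : (k : ℝ) ≠ 0 := by norm_cast; omega
      have hπ : (m : ℝ) * (π / k) = π := by rw [hmk]; push_cast; field_simp
      rw [hπ, cos_pi, sin_pi, hmk]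
      simp only [lt_irrefl, iff_false, not_le]
      linarith

/-- `D_{2k}` with `r_i` at angle `θ`: the point `r_{i+j}` (or `r'_{i+j}`) is listed at offset
`j ∈ (-k, k]`. -/
def doubleRing (k : ℕ) (R ε θ : ℝ) : Set (ℝ × ℝ) :=
  {x | ∃ ρ ∈ ({R, R - ε} : Set ℝ), ∃ j : ℤ, -k < j ∧ j ≤ k ∧ x = polar ρ (θ + j * (π / k))}

/-- `{r_i} ∪ {r_{i+ηm}, r'_{i+ηm} : 0 < m < k}`, with `r_i` at angle `θ`. -/
def ringSide (k : ℕ) (R ε θ : ℝ) (η : ℤ) : Set (ℝ × ℝ) :=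
  insert (polar R θ)
    {x | ∃ ρ ∈ ({R, R - ε} : Set ℝ), ∃ j : ℤ, 0 < η * j ∧ η * j < k ∧ x = polar ρ (θ + j * (π / k))}

lemma exists_halfPlane_ringSide_eq_inter {k : ℕ} {R ε θ : ℝ} (hk : 2 ≤ k) (hε : 0 < ε)
    (hεR : ε < R) {η : ℤ} (hη : η = 1 ∨ η = -1) :
    ∃ H : Set (ℝ × ℝ), Convex ℝ H ∧ polar (R - ε) θ ∉ H ∧
      ringSide k R ε θ η = doubleRing k R ε θ ∩ H := by
  have hsin : 0 < (R - ε) * sin (π / k) :=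
    mul_pos (by linarith) (by simpa using sin_mul_pi_div_pos (k := k) one_pos (by omega))
  set M := 2 * R / ((R - ε) * sin (π / k))
  have hM : 2 * R ≤ M * ((R - ε) * sin (π / k)) := (div_mul_cancel₀ _ hsin.ne').ge
  -- a line through `polar R θ`, so steep that `ρ M |sin (j π / k)| ≥ 2R` beats `ρ cos (j π / k)`
  set H := {x | frameFun θ (-1) (-(η * M)) x ≤ -R}
  have hH : ∀ ρ ∈ ({R, R - ε} : Set ℝ), ∀ j : ℤ, -k < j → j ≤ k →
      (polar ρ (θ + j * (π / k)) ∈ H ↔ (j = 0 ∧ ρ = R) ∨ (0 < η * j ∧ η * j < k)) := by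
    intro ρ hρ j hj hj'
    have hsym : ρ * (-1 * cos (j * (π / k)) + -(η * M) * sin (j * (π / k)))
        = ρ * (-cos ((η * j : ℤ) * (π / k)) - M * sin ((η * j : ℤ) * (π / k))) := by
      rcases hη with rfl | rfl <;> simp only [Int.cast_neg, Int.cast_one, one_mul,
        neg_mul, cos_neg, sin_neg] <;> ring
    have h0 : j = 0 ↔ η * j = 0 := by rcases hη with rfl | rfl <;> omega
    simp only [H, mem_ofPred_eq, frameFun_polar, hsym, h0]
    exact neg_cos_sub_mul_sin_le_iff hε hεR hM hρ (by rcases hη with rfl | rfl <;> omega)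
      (by rcases hη with rfl | rfl <;> omega)
  refine ⟨H, convex_frameFun_le _ _ _ _, fun h => ?_, ?_⟩
  · have := (hH (R - ε) (by simp) 0 (by omega) (by omega)).1 (by simpa using h)
    simp only [true_and, mul_zero, lt_irrefl, false_and, or_false] at this
    linarith
  · ext x
    constructor
    · rintro (rfl | ⟨ρ, hρ, j, hj, hj', rfl⟩)
      · have hmem := (hH R (by simp) 0 (by omega) (by omega)).2 (.inl ⟨rfl, rfl⟩)
        simp only [Int.cast_zero, zero_mul, add_zero] at hmem
        exact ⟨⟨R, by simp, 0, by omega, by omega, by simp⟩, hmem⟩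
      · have hjk : -k < j ∧ j ≤ k := by rcases hη with rfl | rfl <;> omega
        exact ⟨⟨ρ, hρ, j, hjk.1, hjk.2, rfl⟩, (hH ρ hρ j hjk.1 hjk.2).2 (.inr ⟨hj, hj'⟩)⟩
    · rintro ⟨⟨ρ, hρ, j, hj, hj', rfl⟩, hx⟩
      rcases (hH ρ hρ j hj hj').1 hx with ⟨rfl, rfl⟩ | hside
      · left; simp
      · exact .inr ⟨ρ, hρ, j, hside.1, hside.2, rfl⟩

lemma cos_pi_div_le_of_notMem_convexHull {k : ℕ} {R ε θ : ℝ} (hk : 2 ≤ k) (hε : 0 < ε)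
    (hεR : ε < R) (h : polar (R - ε) θ ∉
      convexHull ℝ (doubleRing k R ε θ \ {polar R θ, polar (R - ε) θ})) :
    R * cos (π / k) ≤ R - ε := by
  by_contra! hlt
  apply h
  set s := doubleRing k R ε θ \ {polar R θ, polar (R - ε) θ}
  have radial : ∀ ρ γ, frameFun θ 1 0 (polar ρ (θ + γ)) = ρ * cos γ := fun ρ γ => by
    simp [frameFun_polar]
  have mem : ∀ j : ℤ, -k < j → j ≤ k → R * cos (j * (π / k)) ≠ R →
      R * cos (j * (π / k)) ≠ R - ε → polar R (θ + j * (π / k)) ∈ convexHull ℝ s := by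
    refine fun j hj hj' hR hRε => subset_convexHull ℝ s ⟨⟨R, by simp, j, hj, hj', rfl⟩, ?_⟩
    have radial₀ : ∀ ρ, frameFun θ 1 0 (polar ρ θ) = ρ := fun ρ => by simpa using radial ρ 0
    rintro (he | he) <;> have := congrArg (frameFun θ 1 0) he <;> rw [radial, radial₀] at this
    exacts [hR this, hRε this]
  have hsin : 0 < sin (π / k) := by simpa using sin_mul_pi_div_pos (k := k) one_pos (by omega)
  have hcos : cos (π / k) < 1 := by nlinarith [sin_sq_add_cos_sq (π / k), cos_le_one (π / k)]
  have hplus := mem 1 (by omega) (by omega) (by simp only [Int.cast_one, one_mul]; nlinarith)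
    (by simp only [Int.cast_one, one_mul]; linarith)
  have hminus := mem (-1) (by omega) (by omega)
    (by simp only [Int.cast_neg, Int.cast_one, neg_mul, one_mul, cos_neg]; nlinarith)
    (by simp only [Int.cast_neg, Int.cast_one, neg_mul, one_mul, cos_neg]; linarith)
  have hkπ : ((k : ℤ) : ℝ) * (π / k) = π := by push_cast; field_simp
  have hanti := mem k (by omega) le_rfl (by rw [hkπ, cos_pi]; linarith)
    (by rw [hkπ, cos_pi]; linarith)
  simp only [Int.cast_one, one_mul, Int.cast_neg, neg_mul] at hplus hminus
  rw [hkπ, polar_add_pi] at hanti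
  have hmid := convex_convexHull ℝ s hplus hminus (by norm_num : (0 : ℝ) ≤ 1 / 2)
    (by norm_num : (0 : ℝ) ≤ 1 / 2) (by norm_num)
  rw [smul_polar_add_smul_polar (by rw [sin_neg]; ring), cos_neg, ← add_mul,
    show (1 / 2 + 1 / 2 : ℝ) = 1 by norm_num, one_mul] at hmid
  exact polar_mem_convexHull_of_le hanti hmid (by linarith) hlt.le

lemma mul_cos_mul_pi_div_le {k : ℕ} {R ε ρ : ℝ} (hε : 0 < ε) (hεR : ε < R)
    (hcos : R * cos (π / k) ≤ R - ε) (hρ : ρ ∈ ({R, R - ε} : Set ℝ)) {j : ℤ} (hj : 0 < j)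
    (hjk : j < k) : ρ * cos (j * (π / k)) ≤ R - ε := by
  have hρR : 0 < ρ ∧ ρ ≤ R := by rcases hρ with rfl | rfl <;> constructor <;> linarith
  have := cos_mul_le_cos_pi_div hj hjk
  rcases le_or_gt 0 (cos (j * (π / k))) with h | h <;> nlinarith

lemma subset_ringSide_or_subset_ringSide {k : ℕ} {R ε θ : ℝ} (hε : 0 < ε) (hεR : ε < R)
    (hcos : R * cos (π / k) ≤ R - ε) {C : Set (ℝ × ℝ)} (hCD : C ⊆ doubleRing k R ε θ)
    (hri : polar R θ ∈ C) (hr'i : polar (R - ε) θ ∉ convexHull ℝ C) :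
    C ⊆ ringSide k R ε θ 1 ∨ C ⊆ ringSide k R ε θ (-1) := by
  have hC : ∀ x ∈ C, x = polar R θ ∨ ∃ ρ ∈ ({R, R - ε} : Set ℝ), ∃ j : ℤ, j ≠ 0 ∧ -k < j ∧ j < k ∧
      x = polar ρ (θ + j * (π / k)) := by
    intro x hx
    obtain ⟨ρ, hρ, j, hj, hj', rfl⟩ := hCD hx
    have hρR : 0 < ρ ∧ ρ ≤ R := by rcases hρ with rfl | rfl <;> constructor <;> linarith
    rcases eq_or_ne j 0 with rfl | hj0
    · rcases hρ with rfl | rfl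
      · simp
      · exact (hr'i (by simpa using subset_convexHull ℝ C hx)).elim
    rcases hj'.lt_or_eq with hjk | rfl
    · exact .inr ⟨ρ, hρ, j, hj0, hj, hjk, rfl⟩
    have hk0 : (k : ℝ) ≠ 0 := by norm_cast; omega
    have hx' := subset_convexHull ℝ C hx
    rw [Int.cast_natCast, mul_div_cancel₀ _ hk0, polar_add_pi] at hx'
    exact (hr'i (polar_mem_convexHull_of_le hx' (subset_convexHull ℝ C hri) (by linarith)
      (by linarith))).elim
  by_contra! h
  obtain ⟨x, hxC, hx⟩ := not_subset.1 h.1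
  obtain ⟨y, hyC, hy⟩ := not_subset.1 h.2
  rcases hC x hxC with rfl | ⟨ρ₁, hρ₁, a, ha0, hak, hak', rfl⟩
  · exact hx (mem_insert _ _)
  rcases hC y hyC with rfl | ⟨ρ₂, hρ₂, b, hb0, hbk, hbk', rfl⟩
  · exact hy (mem_insert _ _)
  have ha : a < 0 := by
    by_contra!
    exact hx (.inr ⟨ρ₁, hρ₁, a, by omega, by omega, rfl⟩)
  have hb : 0 < b := by
    by_contra!
    exact hy (.inr ⟨ρ₂, hρ₂, b, by omega, by omega, rfl⟩)
  have hρ₁R : 0 < ρ₁ := by rcases hρ₁ with rfl | rfl <;> linarith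
  have hρ₂R : 0 < ρ₂ := by rcases hρ₂ with rfl | rfl <;> linarith
  have hsina := sin_mul_pi_div_pos (k := k) (j := -a) (by omega) (by omega)
  have hcosa := mul_cos_mul_pi_div_le hε hεR hcos hρ₁ (j := -a) (by omega) (by omega)
  push_cast at hsina hcosa
  rw [neg_mul, sin_neg] at hsina
  rw [neg_mul, cos_neg] at hcosa
  -- the segment joining the two sides crosses the ray through `polar R θ` below `R - ε`
  obtain ⟨c, hc, hcC⟩ := exists_polar_le_max_mem_convexHull (subset_convexHull ℝ C hyC)
    (subset_convexHull ℝ C hxC) (mul_pos hρ₂R (sin_mul_pi_div_pos hb hbk')) (by nlinarith)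
  exact hr'i (polar_mem_convexHull_of_le hcC (subset_convexHull ℝ C hri)
    (hc.trans (max_le (mul_cos_mul_pi_div_le hε hεR hcos hρ₂ hb hbk') hcosa)) (by linarith))

lemma polar_val_add_intCast {k : ℕ} [NeZero k] (ρ : ℝ) (i : ZMod (2 * k)) (j : ℤ) :
    polar ρ (2 * π * ((i + j).val : ℝ) / (2 * k)) =
      polar ρ (2 * π * (i.val : ℝ) / (2 * k) + j * (π / k)) := by
  obtain ⟨q, hq⟩ := (ZMod.intCast_eq_intCast_iff_dvd_sub (i.val + j) (i + j).val (2 * k)).1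
    (by push_cast; rw [ZMod.natCast_zmod_val, ZMod.natCast_zmod_val])
  have hk : (k : ℝ) ≠ 0 := Nat.cast_ne_zero.2 (NeZero.ne k)
  have hq' : ((i + j).val : ℝ) = i.val + j + 2 * k * q := by
    rw [sub_eq_iff_eq_add'] at hq
    exact_mod_cast hq
  rw [← polar_add_int_mul_two_pi ρ (_ + _) q, hq']
  congr 1
  field_simp

section
variable {k : ℕ} {R ε θ : ℝ} {r r' : ZMod (2 * k) → ℝ × ℝ} {i : ZMod (2 * k)}

lemma range_union_range_eq_doubleRing [NeZero k]
    (hr : ∀ j : ℤ, r (i + j) = polar R (θ + j * (π / k)))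
    (hr' : ∀ j : ℤ, r' (i + j) = polar (R - ε) (θ + j * (π / k))) :
    range r ∪ range r' = doubleRing k R ε θ := by
  ext x
  constructor
  · rintro (⟨l, rfl⟩ | ⟨l, rfl⟩) <;>
    · have hl : l = i + ((l - i).valMinAbs : ZMod (2 * k)) := by rw [ZMod.coe_valMinAbs]; ring
      have hj := ZMod.valMinAbs_mem_Ioc (l - i)
      push_cast at hj
      rw [mem_Ioc] at hj
      rw [hl]
      simp only [hr, hr']
      exact ⟨_, by simp, _, by omega, by omega, rfl⟩
  · rintro ⟨ρ, hρ | hρ, j, -, -, rfl⟩ <;> subst hρ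
    exacts [.inl ⟨i + j, hr j⟩, .inr ⟨i + j, hr' j⟩]

lemma union_iUnion_eq_ringSide {η : ℤ} (hη : η = 1 ∨ η = -1) {g : ℕ → ZMod (2 * k)}
    (hg : ∀ m : ℕ, g m = i + ((η * m : ℤ) : ZMod (2 * k)))
    (hr : ∀ j : ℤ, r (i + j) = polar R (θ + j * (π / k)))
    (hr' : ∀ j : ℤ, r' (i + j) = polar (R - ε) (θ + j * (π / k))) :
    {r i} ∪ ⋃ m ∈ Finset.Icc 1 (k - 1), ({r (g m), r' (g m)} : Set (ℝ × ℝ)) =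
      ringSide k R ε θ η := by
  have hηη : η * η = 1 := by rcases hη with rfl | rfl <;> rfl
  have hri : r i = polar R θ := by simpa using hr 0
  ext x
  simp only [mem_union, mem_singleton_iff, mem_iUnion, Finset.mem_Icc, mem_insert_iff, ringSide,
    hri, mem_ofPred_eq]
  refine or_congr_right ⟨?_, ?_⟩
  · rintro ⟨m, ⟨hm1, hmk⟩, hx⟩
    have hm : η * (η * m) = m := by rw [← mul_assoc, hηη, one_mul]
    rcases hx with rfl | rfl
    exacts [⟨R, by simp, η * m, by omega, by omega, by rw [hg, hr]⟩,
      ⟨R - ε, by simp, η * m, by omega, by omega, by rw [hg, hr']⟩]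
  · rintro ⟨ρ, hρ | hρ, j, hj, hjk, rfl⟩ <;> subst hρ <;>
    · refine ⟨(η * j).toNat, by omega, ?_⟩
      have : g (η * j).toNat = i + j := by
        rw [hg, Int.toNat_of_nonneg hj.le, ← mul_assoc, hηη, one_mul]
      simp [this, hr, hr']
end

theorem doubleRing_maximal_convex_sets_general (k : ℕ) (hk : 2 ≤ k) (R ε : ℝ)
    (hε : 0 < ε) (hεR : ε < R)
    (r r' : ZMod (2 * k) → ℝ × ℝ)
    (hr : ∀ j : ZMod (2 * k),
      r j = (R * Real.cos (2 * Real.pi * (j.val : ℝ) / (2 * k)),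
             R * Real.sin (2 * Real.pi * (j.val : ℝ) / (2 * k))))
    (hr' : ∀ j : ZMod (2 * k),
      r' j = ((R - ε) * Real.cos (2 * Real.pi * (j.val : ℝ) / (2 * k)),
              (R - ε) * Real.sin (2 * Real.pi * (j.val : ℝ) / (2 * k))))
    (hvertex : ∀ j : ZMod (2 * k),
      r' j ∉ convexHull ℝ ((Set.range r ∪ Set.range r') \ {r j, r' j}))
    (i : ZMod (2 * k)) (C : Set (ℝ × ℝ))
    (hCD : C ⊆ Set.range r ∪ Set.range r')
    (hCclosed : convexHull ℝ C ∩ (Set.range r ∪ Set.range r') = C)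
    (hri : r i ∈ C) (hri' : r' i ∉ C)
    (hmax : ∀ C' : Set (ℝ × ℝ), C ⊆ C' → C' ⊆ Set.range r ∪ Set.range r' →
      convexHull ℝ C' ∩ (Set.range r ∪ Set.range r') = C' →
      r i ∈ C' → r' i ∉ C' → C' = C) :
    C = {r i} ∪ ⋃ m ∈ Finset.Icc 1 (k - 1),
          ({r (i + (m : ZMod (2 * k))), r' (i + (m : ZMod (2 * k)))} : Set (ℝ × ℝ)) ∨
    C = {r i} ∪ ⋃ m ∈ Finset.Icc 1 (k - 1),
          ({r (i - (m : ZMod (2 * k))), r' (i - (m : ZMod (2 * k)))} : Set (ℝ × ℝ)) := by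
  have : NeZero k := ⟨by omega⟩
  set θ := 2 * π * (i.val : ℝ) / (2 * k)
  have hshift : ∀ j : ℤ, r (i + j) = polar R (θ + j * (π / k)) :=
    fun j => (hr _).trans (polar_val_add_intCast R i j)
  have hshift' : ∀ j : ℤ, r' (i + j) = polar (R - ε) (θ + j * (π / k)) :=
    fun j => (hr' _).trans (polar_val_add_intCast (R - ε) i j)
  have hri_eq : r i = polar R θ := by simpa using hshift 0
  have hr'i_eq : r' i = polar (R - ε) θ := by simpa using hshift' 0
  have hD := range_union_range_eq_doubleRing hshift hshift'
  have hcos : R * cos (π / k) ≤ R - ε := cos_pi_div_le_of_notMem_convexHull hk hε hεR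
    (by simpa only [hD, hri_eq, hr'i_eq] using hvertex i)
  simp only [hD, hri_eq, hr'i_eq] at hCD hCclosed hmax hri hri'
  have hr'C : polar (R - ε) θ ∉ convexHull ℝ C := fun h =>
    hri' (hCclosed ▸ ⟨h, R - ε, by simp, 0, by omega, by omega, by simp⟩)
  have hmaximal : ∀ η : ℤ, (η = 1 ∨ η = -1) → C ⊆ ringSide k R ε θ η →
      ringSide k R ε θ η = C := by
    intro η hη hC
    obtain ⟨H, hH, hr'H, hside⟩ := exists_halfPlane_ringSide_eq_inter hk hε hεR hη
    exact hmax _ hC (hside ▸ inter_subset_left) (convexHull_inter_eq_of_eq_inter hH hside)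
      (mem_insert _ _) fun h => hr'H (hside ▸ h).2
  rw [union_iUnion_eq_ringSide (.inl rfl) (fun m => by simp) hshift hshift',
    union_iUnion_eq_ringSide (η := -1) (.inr rfl) (fun m => by simp [sub_eq_add_neg]) hshift
      hshift']
  rcases subset_ringSide_or_subset_ringSide hε hεR hcos hCD hri hr'C with h | h
  exacts [.inl (hmaximal 1 (.inl rfl) h).symm, .inr (hmaximal (-1) (.inr rfl) h).symm]

/-- in the double ring convex geometry (D_{2k}, C_{2k}), any
convexly closed set containing r_i but not r'_i that is inclusion-wise maximal
with this property is {r_i} ∪ {r_{i+1}, r'_{i+1}, …, r_{i+(k-1)}, r'_{i+(k-1)}}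
or {r_i} ∪ {r_{i-1}, r'_{i-1}, …, r_{i-(k-1)}, r'_{i-(k-1)}}. -/
theorem doubleRing_maximal_convex_sets (k : ℕ) (hk : 2 ≤ k) (R ε : ℝ)
    (hR : 0 < R) (hε : 0 < ε) (hεR : ε < R)
    (r r' : ZMod (2 * k) → ℝ × ℝ)
    (hr : ∀ j : ZMod (2 * k),
      r j = (R * Real.cos (2 * Real.pi * (j.val : ℝ) / (2 * k)),
             R * Real.sin (2 * Real.pi * (j.val : ℝ) / (2 * k))))
    (hr' : ∀ j : ZMod (2 * k),
      r' j = ((R - ε) * Real.cos (2 * Real.pi * (j.val : ℝ) / (2 * k)),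
              (R - ε) * Real.sin (2 * Real.pi * (j.val : ℝ) / (2 * k))))
    (hvertex : ∀ j : ZMod (2 * k),
      r' j ∉ convexHull ℝ ((Set.range r ∪ Set.range r') \ {r j, r' j}))
    (i : ZMod (2 * k)) (C : Set (ℝ × ℝ))
    (hCD : C ⊆ Set.range r ∪ Set.range r')
    (hCclosed : convexHull ℝ C ∩ (Set.range r ∪ Set.range r') = C)
    (hri : r i ∈ C) (hri' : r' i ∉ C)
    (hmax : ∀ C' : Set (ℝ × ℝ), C ⊆ C' → C' ⊆ Set.range r ∪ Set.range r' →
      convexHull ℝ C' ∩ (Set.range r ∪ Set.range r') = C' →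
      r i ∈ C' → r' i ∉ C' → C' = C) :
    C = {r i} ∪ ⋃ m ∈ Finset.Icc 1 (k - 1),
          ({r (i + (m : ZMod (2 * k))), r' (i + (m : ZMod (2 * k)))} : Set (ℝ × ℝ)) ∨
    C = {r i} ∪ ⋃ m ∈ Finset.Icc 1 (k - 1),
          ({r (i - (m : ZMod (2 * k))), r' (i - (m : ZMod (2 * k)))} : Set (ℝ × ℝ)) :=
  doubleRing_maximal_convex_sets_general k hk R ε hε hεR r r' hr hr' hvertex i C hCD hCclosed hri
    hri' hmax
end
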